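/- For each n, let Σ_n be a symmetric positive definite d(n)×d(n) matrix whose eigenvalues are bounded away from zero and from above uniformly in n, and let Σ̂_n be a symmetric positive semidefinite random d(n)×d(n) matrix with ‖Σ̂_n − Σ_n‖₂ = O_P(a_n) for some sequence a_n → 0, where ‖·‖₂ is the spectral norm. Then ‖Σ̂_n^{-1/2} − Σ_n^{-1/2}‖₂ = O_P(a_n), where M^{-1/2} denotes the Moore–Penrose inverse of the positive semidefinite square root of M. Equivalently: for every δ > 0 there is M > 0 such that limsup_n P(Σ̂_n is singular, or ‖Σ̂_n^{-1/2} − Σ_n^{-1/2}‖₂ > M a_n) ≤ δ. -/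

import Mathlib

open MeasureTheory ProbabilityTheory Filter Real Matrix
open scoped ENNReal NNReal BigOperators

noncomputable section

/-- The Moore–Penrose pseudoinverse of a real square matrix, characterized by the four
Penrose conditions (which determine it uniquely whenever a solution exists, and a solution
always exists for real matrices). -/
def moorePenrose {m : ℕ} (A : Matrix (Fin m) (Fin m) ℝ) : Matrix (Fin m) (Fin m) ℝ :=
  by classical exact
  if h : ∃ B : Matrix (Fin m) (Fin m) ℝ,
      A * B * A = A ∧ B * A * B = B ∧ (A * B)ᵀ = A * B ∧ (B * A)ᵀ = B * A
  then h.choose else 0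

/-- The positive semidefinite square root of a positive semidefinite matrix
(junk value `0` if the matrix is not psd). -/
def psdSqrt {m : ℕ} (A : Matrix (Fin m) (Fin m) ℝ) : Matrix (Fin m) (Fin m) ℝ :=
  by classical exact if h : A.PosSemidef then ((h.1.eigenvectorUnitary : Matrix (Fin m) (Fin m) ℝ) * Matrix.diagonal (fun i => Real.sqrt (h.1.eigenvalues i)) * (star h.1.eigenvectorUnitary : Matrix (Fin m) (Fin m) ℝ)) else 0

/-- `A^{-1/2}`: the Moore–Penrose inverse of the positive semidefinite square root of `A`. -/
def invSqrt {m : ℕ} (A : Matrix (Fin m) (Fin m) ℝ) : Matrix (Fin m) (Fin m) ℝ :=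
  moorePenrose (psdSqrt A)

/-- The `p`-norm on `ℝ^m` (for finite `p`). -/
def pNorm {m : ℕ} (p : ℝ) (x : Fin m → ℝ) : ℝ :=
  (∑ i, |x i| ^ p) ^ (1 / p)

/-- The spectral norm of a real matrix. -/
def specNorm {m : ℕ} (A : Matrix (Fin m) (Fin m) ℝ) : ℝ :=
  sSup ((fun x => Real.sqrt (∑ i, (A.mulVec x i) ^ 2)) '' {x | ∑ i, (x i) ^ 2 ≤ 1})

/-- The standard normal cumulative distribution function `Φ`. -/
def Phi (t : ℝ) : ℝ := (gaussianReal 0 1 (Set.Iic t)).toReal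

/-- `λ_p(x) = E|Z + x|^p` for `Z` standard normal. -/
def lamP (p x : ℝ) : ℝ := ∫ z, |z + x| ^ p ∂(gaussianReal 0 1)

/-- `σ_p = sqrt(Var(|Z|^p)) = sqrt(E|Z|^{2p} - (E|Z|^p)²)`. -/
def sigmaP (p : ℝ) : ℝ := Real.sqrt (lamP (2 * p) 0 - (lamP p 0) ^ 2)

/-- `g_p(x) = max(x², |x|^p)`. -/
def gP (p x : ℝ) : ℝ := max (x ^ 2) (|x| ^ p)

/-- The standard Gaussian measure `N(0, I_m)` on `ℝ^m`. -/
def stdGaussianPi (m : ℕ) : Measure (Fin m → ℝ) :=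
  Measure.pi fun _ => gaussianReal 0 1

/-- Convergence in distribution to the standard normal law, expressed via pointwise
convergence of the cumulative distribution functions (the limit cdf being continuous,
this is equivalent to weak convergence). -/
def TendstoStdNormal {Ω : Type*} [MeasurableSpace Ω] (P : Measure Ω) (X : ℕ → Ω → ℝ) : Prop :=
  ∀ t : ℝ, Tendsto (fun n => (P {ω | X n ω ≤ t}).toReal) atTop (nhds (Phi t))

/-- `X_n = O_P(a_n)`: for every `δ > 0` there is `M > 0` with
`limsup_n P(|X_n| > M a_n) ≤ δ`. -/
def IsBigOP {Ω : Type*} [MeasurableSpace Ω] (P : Measure Ω) (X : ℕ → Ω → ℝ) (a : ℕ → ℝ) : Prop :=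
  ∀ δ : ℝ, 0 < δ → ∃ M : ℝ, 0 < M ∧
    Filter.limsup (fun n => (P {ω | M * a n < |X n ω|}).toReal) Filter.atTop ≤ δ

section Setup

variable {Ω : Type*} [MeasurableSpace Ω]

/-- The scaled empirical moment vector `H_n = n^{-1/2} ∑_{i=1}^n Y_{i,n}`. -/
def Hstat {d : ℕ → ℕ} (Y : (n : ℕ) → Fin n → Ω → (Fin (d n) → ℝ)) (n : ℕ) (ω : Ω) :
    Fin (d n) → ℝ :=
  (Real.sqrt n)⁻¹ • ∑ i : Fin n, Y n i ω

/-- The noncentrality vector `θ_n = √n · Σ_n^{-1/2} μ_n`. -/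
def theta {d : ℕ → ℕ} (μ : (n : ℕ) → Fin (d n) → ℝ)
    (SigM : (n : ℕ) → Matrix (Fin (d n)) (Fin (d n)) ℝ) (n : ℕ) : Fin (d n) → ℝ :=
  Real.sqrt n • (invSqrt (SigM n)).mulVec (μ n)

/-- The normalized statistic vector `Σ̂_n^{-1/2} H_n`. -/
def Vstat {d : ℕ → ℕ} (Y : (n : ℕ) → Fin n → Ω → (Fin (d n) → ℝ))
    (SigH : (n : ℕ) → Ω → Matrix (Fin (d n)) (Fin (d n)) ℝ) (n : ℕ) (ω : Ω) :
    Fin (d n) → ℝ :=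
  (invSqrt (SigH n ω)).mulVec (Hstat Y n ω)

/-- The test statistic `S_{n,p} = ‖Σ̂_n^{-1/2} H_n‖_p` for finite `p`. -/
def Sstat {d : ℕ → ℕ} (Y : (n : ℕ) → Fin n → Ω → (Fin (d n) → ℝ))
    (SigH : (n : ℕ) → Ω → Matrix (Fin (d n)) (Fin (d n)) ℝ) (p : ℝ) (n : ℕ) (ω : Ω) : ℝ :=
  pNorm p (Vstat Y SigH n ω)

/-- The test statistic `S_{n,∞} = ‖Σ̂_n^{-1/2} H_n‖_∞` (the norm on the Pi type
`Fin (d n) → ℝ` is the supremum norm). -/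
def SstatInf {d : ℕ → ℕ} (Y : (n : ℕ) → Fin n → Ω → (Fin (d n) → ℝ))
    (SigH : (n : ℕ) → Ω → Matrix (Fin (d n)) (Fin (d n)) ℝ) (n : ℕ) (ω : Ω) : ℝ :=
  ‖Vstat Y SigH n ω‖

/-- Basic setup: the `Y_{i,n}` are identically distributed with mean vector `μ_n`, `Σ_n`
is the (positive definite) covariance matrix of `H_n` (whose mean is `√n μ_n`), and the
estimator `Σ̂_n` is symmetric positive semidefinite. -/
def BaseSetup (P : Measure Ω) (d : ℕ → ℕ)
    (Y : (n : ℕ) → Fin n → Ω → (Fin (d n) → ℝ))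
    (μ : (n : ℕ) → Fin (d n) → ℝ)
    (SigM : (n : ℕ) → Matrix (Fin (d n)) (Fin (d n)) ℝ)
    (SigH : (n : ℕ) → Ω → Matrix (Fin (d n)) (Fin (d n)) ℝ) : Prop :=
  (∀ n (i j : Fin n), IdentDistrib (Y n i) (Y n j) P P) ∧
  (∀ n (i : Fin n) (j : Fin (d n)), ∫ ω, Y n i ω j ∂P = μ n j) ∧
  (∀ n, (SigM n).PosDef) ∧
  (∀ n (j k : Fin (d n)), SigM n j k =
      ∫ ω, (Hstat Y n ω j - Real.sqrt n * μ n j) * (Hstat Y n ω k - Real.sqrt n * μ n k) ∂P) ∧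
  (∀ n ω, (SigH n ω).PosSemidef)

/-- Assumption C: `d(n) → ∞`; the eigenvalues of `Σ_n` are bounded away from zero and
from above uniformly in `n`; `‖Σ̂_n − Σ_n‖₂ = O_P(a_n)` (spectral norm) with
`d^{3/4} a_n → 0`; and a Gaussian approximation for `Σ_n^{-1/2} H_n` holds uniformly
over convex Borel sets. -/
def AssumptionC (P : Measure Ω) (d : ℕ → ℕ)
    (Y : (n : ℕ) → Fin n → Ω → (Fin (d n) → ℝ))
    (μ : (n : ℕ) → Fin (d n) → ℝ)
    (SigM : (n : ℕ) → Matrix (Fin (d n)) (Fin (d n)) ℝ)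
    (SigH : (n : ℕ) → Ω → Matrix (Fin (d n)) (Fin (d n)) ℝ) : Prop :=
  Tendsto d atTop atTop ∧
  (∃ c₁ c₂ : ℝ, 0 < c₁ ∧ ∀ n (x : Fin (d n) → ℝ),
      c₁ * (∑ i, (x i) ^ 2) ≤ dotProduct x ((SigM n).mulVec x) ∧
      dotProduct x ((SigM n).mulVec x) ≤ c₂ * (∑ i, (x i) ^ 2)) ∧
  (∃ a : ℕ → ℝ, (∀ n, 0 < a n) ∧
      Tendsto (fun n => (d n : ℝ) ^ ((3 : ℝ) / 4) * a n) atTop (nhds 0) ∧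
      IsBigOP P (fun n ω => specNorm (SigH n ω - SigM n)) a) ∧
  (∀ ε : ℝ, 0 < ε → ∃ N : ℕ, ∀ n ≥ N, ∀ C : Set (Fin (d n) → ℝ),
      Convex ℝ C → MeasurableSet C →
      |(P {ω | (invSqrt (SigM n)).mulVec (Hstat Y n ω) ∈ C}).toReal -
        (stdGaussianPi (d n) {z | z + theta μ SigM n ∈ C}).toReal| ≤ ε)

/-- Part (i) of Assumption P (for exponent `p`): along every subsequence `n'` for which
`(1/√d')·∑ᵢ [λ_p(θ_{i,n'}) − λ_p(0)]` is bounded,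
`(S_{n',p}^p − ∑ᵢ λ_p(θ_{i,n'}))/(√d'·σ_p)` converges in distribution to `N(0,1)`. -/
def AssumpP1 (P : Measure Ω) (d : ℕ → ℕ)
    (Y : (n : ℕ) → Fin n → Ω → (Fin (d n) → ℝ))
    (μ : (n : ℕ) → Fin (d n) → ℝ)
    (SigM : (n : ℕ) → Matrix (Fin (d n)) (Fin (d n)) ℝ)
    (SigH : (n : ℕ) → Ω → Matrix (Fin (d n)) (Fin (d n)) ℝ) (p : ℝ) : Prop :=
  ∀ φ : ℕ → ℕ, StrictMono φ →
    (∃ B : ℝ, ∀ k,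
        |(Real.sqrt (d (φ k)))⁻¹ *
          ∑ i, (lamP p (theta μ SigM (φ k) i) - lamP p 0)| ≤ B) →
    TendstoStdNormal P (fun k ω =>
      (Sstat Y SigH p (φ k) ω ^ p - ∑ i, lamP p (theta μ SigM (φ k) i)) /
        (Real.sqrt (d (φ k)) * sigmaP p))

/-- Part (ii) of Assumption P (for exponent `p`): if
`(1/√d)·∑ᵢ [λ_p(θ_{i,n}) − λ_p(0)] → ∞`, then
`(S_{n,p}^p − ∑ᵢ λ_p(θ_{i,n}))/(∑ᵢ [λ_p(θ_{i,n}) − λ_p(0)]) → 0` in probability. -/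
def AssumpP2 (P : Measure Ω) (d : ℕ → ℕ)
    (Y : (n : ℕ) → Fin n → Ω → (Fin (d n) → ℝ))
    (μ : (n : ℕ) → Fin (d n) → ℝ)
    (SigM : (n : ℕ) → Matrix (Fin (d n)) (Fin (d n)) ℝ)
    (SigH : (n : ℕ) → Ω → Matrix (Fin (d n)) (Fin (d n)) ℝ) (p : ℝ) : Prop :=
  Tendsto (fun n => (Real.sqrt (d n))⁻¹ *
      ∑ i, (lamP p (theta μ SigM n i) - lamP p 0)) atTop atTop →
    ∀ ε : ℝ, 0 < ε →
      Tendsto (fun n => (P {ω |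
        ε < |(Sstat Y SigH p n ω ^ p - ∑ i, lamP p (theta μ SigM n i)) /
          (∑ i, (lamP p (theta μ SigM n i) - lamP p 0))|}).toReal) atTop (nhds 0)

end Setup

/-- A critical value sequence `κ_n` is size-`α` calibrated for finite exponent `p` if
`(κ_n^p − d·λ_p(0))/(√d·σ_p) → Φ^{-1}(1−α)`. -/
def CalibratedP (d : ℕ → ℕ) (p α : ℝ) (κ : ℕ → ℝ) : Prop :=
  ∃ q : ℝ, Phi q = 1 - α ∧
    Tendsto (fun n => (κ n ^ p - (d n : ℝ) * lamP p 0) / (Real.sqrt (d n) * sigmaP p))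
      atTop (nhds q)

/-- A critical value sequence `κ_n` is size-`α` calibrated for exponent `∞` if eventually
`κ_n = √(2 log d) − (log log d + log(4π))/(2√(2 log d)) − (log(−log(1−α)/2) + o(1))/√(2 log d)`. -/
def CalibratedInf (d : ℕ → ℕ) (α : ℝ) (κ : ℕ → ℝ) : Prop :=
  ∃ e : ℕ → ℝ, Tendsto e atTop (nhds 0) ∧
    ∀ᶠ n in atTop, κ n =
      Real.sqrt (2 * Real.log (d n)) -
        (Real.log (Real.log (d n)) + Real.log (4 * π)) /
          (2 * Real.sqrt (2 * Real.log (d n))) -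
        (Real.log (-Real.log (1 - α) / 2) + e n) / Real.sqrt (2 * Real.log (d n))

/-- The constant `𝔠_d = √(2 log d) − log log d / (2 √(2 log d))` for `d ≥ 2`, and `0` otherwise. -/
def cFrak (m : ℕ) : ℝ :=
  if 2 ≤ m then
    Real.sqrt (2 * Real.log m) - Real.log (Real.log m) / (2 * Real.sqrt (2 * Real.log m))
  else 0

/-- `max_{p ∈ 𝔓_n} κ_{n,p}^{-1} ‖z‖_p`, where `𝔓_n = {2, p_1, …, p_{m_n}, ∞}`. -/
def psiMaxVal (κ2 κinf : ℝ) (pseq : ℕ → ℝ) (mn : ℕ) (κI : ℕ → ℝ) {k : ℕ}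
    (z : Fin k → ℝ) : ℝ :=
  max (κ2⁻¹ * pNorm 2 z)
    (max (κinf⁻¹ * ‖z‖) (⨆ j : Fin mn, (κI j)⁻¹ * pNorm (pseq j) z))

/-
Once `‖Σ̂ - Σ‖₂ ≤ c/2`, where `c` is the uniform lower bound of the eigenvalues of `Σ`, the
estimate becomes deterministic: `Σ̂ ≥ c/2`, so `Σ̂` is invertible and `Σ̂^{-1/2}` is a genuine
inverse of norm at most `(c/2)^{-1/2}`. Writing
`Σ̂^{-1/2} - Σ^{-1/2} = Σ̂^{-1/2} (Σ^{1/2} - Σ̂^{1/2}) Σ^{-1/2}` and using the perturbation bound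
`√c ‖Σ^{1/2} - Σ̂^{1/2}‖₂ ≤ ‖Σ - Σ̂‖₂` gives `‖Σ̂^{-1/2} - Σ^{-1/2}‖₂ ≤ K ‖Σ̂ - Σ‖₂` with `K`
depending only on `c`. Since `a_n → 0`, the event `‖Σ̂_n - Σ_n‖₂ ≤ M₀ a_n` eventually forces
`‖Σ̂_n - Σ_n‖₂ ≤ c/2`, so the `O_P` bound transfers with the constant `K M₀`.
-/

section

open scoped Matrix.Norms.L2Operator MatrixOrder

namespace Matrix

variable {n : Type*} [Fintype n] [DecidableEq n]

lemma abs_dotProduct_mulVec_le (M : Matrix n n ℝ) (x : n → ℝ) :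
    |x ⬝ᵥ M *ᵥ x| ≤ ‖M‖ * (x ⬝ᵥ x) := by
  have hx : x ⬝ᵥ x = ‖WithLp.toLp 2 x‖ ^ 2 := by
    rw [← real_inner_self_eq_norm_sq, EuclideanSpace.inner_toLp_toLp, star_trivial]
  calc |x ⬝ᵥ M *ᵥ x| = |inner ℝ (WithLp.toLp 2 x) (WithLp.toLp 2 (M *ᵥ x))| := by
        rw [EuclideanSpace.inner_toLp_toLp, star_trivial, dotProduct_comm]
    _ ≤ ‖WithLp.toLp 2 x‖ * ‖WithLp.toLp 2 (M *ᵥ x)‖ := abs_real_inner_le_norm _ _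
    _ ≤ ‖WithLp.toLp 2 x‖ * (‖M‖ * ‖WithLp.toLp 2 x‖) := by
        gcongr; exact l2_opNorm_mulVec M (WithLp.toLp 2 x)
    _ = ‖M‖ * (x ⬝ᵥ x) := by rw [hx]; ring

lemma algebraMap_le_iff_forall_dotProduct_mulVec {A : Matrix n n ℝ} (hA : A.IsHermitian)
    {c : ℝ} :
    algebraMap ℝ _ c ≤ A ↔ ∀ x, c * (x ⬝ᵥ x) ≤ x ⬝ᵥ A *ᵥ x := by
  have hc : (algebraMap ℝ (Matrix n n ℝ) c).IsHermitian := (IsSelfAdjoint.all c).algebraMap _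
  rw [le_iff, posSemidef_iff_dotProduct_mulVec, and_iff_right (hA.sub hc)]
  simp [Algebra.algebraMap_eq_smul_one, sub_mulVec, dotProduct_sub, smul_mulVec]

lemma algebraMap_le_of_le_sub_norm {A B : Matrix n n ℝ} (hA : A.IsHermitian)
    (hB : B.IsHermitian) {c d : ℝ} (h : algebraMap ℝ _ c ≤ A) (hd : d ≤ c - ‖B - A‖) :
    algebraMap ℝ _ d ≤ B := by
  rw [algebraMap_le_iff_forall_dotProduct_mulVec hA] at h
  rw [algebraMap_le_iff_forall_dotProduct_mulVec hB]
  intro x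
  have hBA := abs_le.1 (abs_dotProduct_mulVec_le (B - A) x)
  rw [sub_mulVec, dotProduct_sub] at hBA
  have hxx : 0 ≤ x ⬝ᵥ x := by simpa using dotProduct_star_self_nonneg x
  nlinarith [h x]

lemma isUnit_and_norm_inv_le_of_algebraMap_le {S : Matrix n n ℝ} (hS : S.IsHermitian) {r : ℝ}
    (hr : 0 < r) (h : algebraMap ℝ _ r ≤ S) : IsUnit S ∧ ‖S⁻¹‖ ≤ r⁻¹ := by
  rw [algebraMap_le_iff_le_spectrum (p := IsSelfAdjoint) hS.isSelfAdjoint] at h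
  have hS : IsUnit S := (spectrum.zero_notMem_iff ℝ).1 fun h0 ↦ (h 0 h0).not_gt hr
  refine ⟨hS, ?_⟩
  rw [← hS.unit_spec, ← coe_units_inv, ← cfc_inv_id (R := ℝ) hS.unit]
  refine norm_cfc_le (inv_nonneg.2 hr.le) fun x hx ↦ ?_
  have hrx := h x hx
  rw [Real.norm_eq_abs, abs_inv, abs_of_pos (hr.trans_le hrx)]
  exact inv_anti₀ hr hrx

lemma algebraMap_sqrt_le_cfc_sqrt {A : Matrix n n ℝ} (hA : A.IsHermitian) {c : ℝ}
    (h : algebraMap ℝ _ c ≤ A) : algebraMap ℝ _ √c ≤ cfc Real.sqrt A := by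
  rw [algebraMap_le_iff_le_spectrum (p := IsSelfAdjoint) hA.isSelfAdjoint] at h
  rw [algebraMap_le_iff_le_spectrum (p := IsSelfAdjoint), cfc_map_spectrum Real.sqrt A]
  rintro _ ⟨x, hx, rfl⟩
  exact Real.sqrt_le_sqrt (h x hx)

lemma cfc_sqrt_mul_self {A : Matrix n n ℝ} (hA : A.PosSemidef) :
    cfc Real.sqrt A * cfc Real.sqrt A = A := by
  conv_rhs => rw [← cfc_id' ℝ A]
  rw [← cfc_mul ..]
  exact cfc_congr fun x hx ↦ Real.mul_self_sqrt (spectrum_nonneg_of_nonneg hA.nonneg hx)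

lemma exists_mulVec_eq_smul_of_mem_spectrum {X : Matrix n n ℝ} {t : ℝ}
    (ht : t ∈ spectrum ℝ X) :
    ∃ w, w ≠ 0 ∧ X *ᵥ w = t • w := by
  rw [spectrum.mem_iff, isUnit_iff_isUnit_det, isUnit_iff_ne_zero, not_not,
    ← exists_mulVec_eq_zero_iff] at ht
  obtain ⟨w, hw, hXw⟩ := ht
  refine ⟨w, hw, ?_⟩
  rw [Algebra.algebraMap_eq_smul_one, sub_mulVec, smul_mulVec, one_mulVec, sub_eq_zero] at hXw
  exact hXw.symm

lemma dotProduct_mul_self_sub_mul_self_mulVec {S T : Matrix n n ℝ} (hST : (S - T).IsHermitian)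
    {w : n → ℝ} {t : ℝ} (hw : (S - T) *ᵥ w = t • w) :
    w ⬝ᵥ (S * S - T * T) *ᵥ w = t * (w ⬝ᵥ S *ᵥ w + w ⬝ᵥ T *ᵥ w) := by
  have hsymm : w ᵥ* (S - T) = t • w := by
    rw [← mulVec_transpose, ← conjTranspose_eq_transpose_of_trivial, hST.eq, hw]
  have hsplit : S * S - T * T = S * (S - T) + (S - T) * T := by noncomm_ring
  rw [hsplit, add_mulVec, dotProduct_add, ← mulVec_mulVec, ← mulVec_mulVec, hw,
    dotProduct_mulVec w (S - T), hsymm]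
  simp only [mulVec_smul, dotProduct_smul, smul_dotProduct, smul_eq_mul]
  ring

/-- Test `S * S - T * T = S * (S - T) + (S - T) * T` on an eigenvector of `S - T` whose
eigenvalue has modulus `‖S - T‖`. -/
lemma mul_norm_sub_le_norm_mul_self_sub {S T : Matrix n n ℝ} (hS : S.IsHermitian)
    (hT : T.PosSemidef) {r : ℝ} (h : algebraMap ℝ _ r ≤ S) : r * ‖S - T‖ ≤ ‖S * S - T * T‖ := by
  cases isEmpty_or_nonempty n
  · simp [Subsingleton.elim (S - T) 0]
  obtain ⟨t, ht, hnorm⟩ := (IsometricContinuousFunctionalCalculus.isGreatest_norm_spectrum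
    (𝕜 := ℝ) (S - T) (hS.sub hT.1).isSelfAdjoint).1
  obtain ⟨w, hw0, hw⟩ := exists_mulVec_eq_smul_of_mem_spectrum ht
  have hww : 0 < w ⬝ᵥ w := dotProduct_self_star_pos_iff.2 hw0
  have hrS := (algebraMap_le_iff_forall_dotProduct_mulVec hS).1 h w
  have hTw : 0 ≤ w ⬝ᵥ T *ᵥ w := by simpa using hT.dotProduct_mulVec_nonneg w
  have key := abs_dotProduct_mulVec_le (S * S - T * T) w
  rw [dotProduct_mul_self_sub_mul_self_mulVec (hS.sub hT.1) hw, abs_mul, ← Real.norm_eq_abs t,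
    show ‖t‖ = ‖S - T‖ from hnorm] at key
  have hsum : r * (w ⬝ᵥ w) ≤ |w ⬝ᵥ S *ᵥ w + w ⬝ᵥ T *ᵥ w| :=
    (le_abs_self _).trans' (by linarith)
  refine le_of_mul_le_mul_right ?_ hww
  calc r * ‖S - T‖ * (w ⬝ᵥ w) = ‖S - T‖ * (r * (w ⬝ᵥ w)) := by ring
    _ ≤ ‖S - T‖ * |w ⬝ᵥ S *ᵥ w + w ⬝ᵥ T *ᵥ w| := by gcongr
    _ ≤ ‖S * S - T * T‖ * (w ⬝ᵥ w) := key

end Matrix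

variable {m : ℕ}

lemma specNorm_eq_l2_opNorm (A : Matrix (Fin m) (Fin m) ℝ) : specNorm A = ‖A‖ := by
  have hball : WithLp.toLp 2 '' {x : Fin m → ℝ | ∑ i, x i ^ 2 ≤ 1} = Metric.closedBall 0 1 := by
    ext y
    simpa [EuclideanSpace.norm_eq, Real.sqrt_le_one] using
      ⟨fun ⟨x, hx, e⟩ ↦ e ▸ hx, fun h ↦ ⟨y.ofLp, h, rfl⟩⟩
  rw [cstar_norm_def, ← ContinuousLinearMap.sSup_unitClosedBall_eq_norm, specNorm, ← hball,
    Set.image_image]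
  simp [EuclideanSpace.norm_eq, toEuclideanCLM_toLp]

lemma psdSqrt_eq_cfc {A : Matrix (Fin m) (Fin m) ℝ} (hA : A.PosSemidef) :
    psdSqrt A = cfc Real.sqrt A := by
  rw [hA.1.cfc_eq, IsHermitian.cfc, psdSqrt, dif_pos hA, Unitary.conjStarAlgAut_apply]
  rfl

lemma moorePenrose_eq_inv {A : Matrix (Fin m) (Fin m) ℝ} (hA : IsUnit A) :
    moorePenrose A = A⁻¹ := by
  have hdet := (isUnit_iff_isUnit_det A).1 hA
  have hex : ∃ B : Matrix (Fin m) (Fin m) ℝ,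
      A * B * A = A ∧ B * A * B = B ∧ (A * B)ᵀ = A * B ∧ (B * A)ᵀ = B * A :=
    ⟨A⁻¹, by simp [mul_nonsing_inv _ hdet, nonsing_inv_mul _ hdet]⟩
  rw [moorePenrose, dif_pos hex]
  calc hex.choose = A⁻¹ * A * hex.choose * (A * A⁻¹) := by
        rw [nonsing_inv_mul _ hdet, mul_nonsing_inv _ hdet, one_mul, mul_one]
    _ = A⁻¹ * (A * hex.choose * A) * A⁻¹ := by simp only [mul_assoc]
    _ = A⁻¹ := by rw [hex.choose_spec.1, nonsing_inv_mul _ hdet, one_mul]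

lemma invSqrt_eq_inv_cfc_sqrt {A : Matrix (Fin m) (Fin m) ℝ} (hA : A.PosSemidef)
    (h : IsUnit (cfc Real.sqrt A)) : invSqrt A = (cfc Real.sqrt A)⁻¹ := by
  rw [invSqrt, psdSqrt_eq_cfc hA, moorePenrose_eq_inv h]

theorem isUnit_and_specNorm_invSqrt_sub_le {A B : Matrix (Fin m) (Fin m) ℝ} (hA : A.PosSemidef)
    (hB : B.PosSemidef) {c : ℝ} (hc : 0 < c) (hcA : ∀ x, c * (x ⬝ᵥ x) ≤ x ⬝ᵥ A *ᵥ x)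
    (hBA : specNorm (B - A) ≤ c / 2) :
    IsUnit B ∧ specNorm (invSqrt B - invSqrt A) ≤ specNorm (B - A) / (c * √(c / 2)) := by
  simp only [specNorm_eq_l2_opNorm] at hBA ⊢
  rw [← algebraMap_le_iff_forall_dotProduct_mulVec hA.1] at hcA
  have hcB : algebraMap ℝ _ (c / 2) ≤ B := algebraMap_le_of_le_sub_norm hA.1 hB.1 hcA (by linarith)
  have hSA := algebraMap_sqrt_le_cfc_sqrt hA.1 hcA
  have hSB := algebraMap_sqrt_le_cfc_sqrt hB.1 hcB
  have hA' : (cfc Real.sqrt A).IsHermitian := cfc_predicate _ _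
  have hB' : (cfc Real.sqrt B).PosSemidef :=
    nonneg_iff_posSemidef.1 (cfc_nonneg fun x _ ↦ Real.sqrt_nonneg x)
  obtain ⟨hAu, hAinv⟩ := isUnit_and_norm_inv_le_of_algebraMap_le hA' (by positivity) hSA
  obtain ⟨hBu, hBinv⟩ := isUnit_and_norm_inv_le_of_algebraMap_le hB'.1 (by positivity) hSB
  have hsqrt := mul_norm_sub_le_norm_mul_self_sub hA' hB' hSA
  rw [cfc_sqrt_mul_self hA, cfc_sqrt_mul_self hB, norm_sub_rev A B] at hsqrt
  refine ⟨(isUnit_and_norm_inv_le_of_algebraMap_le hB.1 (by positivity) hcB).1, ?_⟩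
  rw [invSqrt_eq_inv_cfc_sqrt hA hAu, invSqrt_eq_inv_cfc_sqrt hB hBu,
    inv_sub_inv (iff_of_true hBu hAu)]
  have hc' : 0 < √c := Real.sqrt_pos.2 hc
  calc _ ≤ ‖(cfc Real.sqrt B)⁻¹‖ * ‖cfc Real.sqrt A - cfc Real.sqrt B‖ *
          ‖(cfc Real.sqrt A)⁻¹‖ := norm_mul₃_le
    _ ≤ (√(c / 2))⁻¹ * (‖B - A‖ / √c) * (√c)⁻¹ := by
        gcongr
        rwa [le_div_iff₀ hc', mul_comm]
    _ = ‖B - A‖ / (c * √(c / 2)) := by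
        field_simp
        rw [Real.sq_sqrt hc.le, mul_comm]

end

lemma limsup_toReal_measure_mono {Ω : Type*} [MeasurableSpace Ω] {P : Measure Ω}
    [IsFiniteMeasure P] {s t : ℕ → Set Ω} (h : ∀ᶠ n in atTop, s n ⊆ t n) :
    limsup (fun n ↦ (P (s n)).toReal) atTop ≤ limsup (fun n ↦ (P (t n)).toReal) atTop :=
  limsup_le_limsup (h.mono fun _ hst ↦ ENNReal.toReal_mono (measure_ne_top _ _) (measure_mono hst))
    (isCoboundedUnder_le_of_le atTop fun _ ↦ ENNReal.toReal_nonneg)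
    (isBoundedUnder_of ⟨(P Set.univ).toReal, fun _ ↦
      ENNReal.toReal_mono (measure_ne_top _ _) (measure_mono (Set.subset_univ _))⟩)

theorem invSqrt_estimation_error_general {Ω : Type*} [MeasurableSpace Ω] (P : Measure Ω)
    [IsProbabilityMeasure P]
    (m : ℕ → ℕ) (SigM : (n : ℕ) → Matrix (Fin (m n)) (Fin (m n)) ℝ)
    (SigH : (n : ℕ) → Ω → Matrix (Fin (m n)) (Fin (m n)) ℝ)
    (hpd : ∀ n, (SigM n).PosDef)
    (heig : ∃ c₁ c₂ : ℝ, 0 < c₁ ∧ ∀ n (x : Fin (m n) → ℝ),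
        c₁ * (∑ i, (x i) ^ 2) ≤ dotProduct x ((SigM n).mulVec x) ∧
        dotProduct x ((SigM n).mulVec x) ≤ c₂ * (∑ i, (x i) ^ 2))
    (hpsd : ∀ n ω, (SigH n ω).PosSemidef)
    (a : ℕ → ℝ) (ha0 : Tendsto a atTop (nhds 0))
    (hOP : IsBigOP P (fun n ω => specNorm (SigH n ω - SigM n)) a) :
    ∀ δ : ℝ, 0 < δ → ∃ M : ℝ, 0 < M ∧
      Filter.limsup (fun n =>
          (P {ω | (SigH n ω).det = 0 ∨
            M * a n < specNorm (invSqrt (SigH n ω) - invSqrt (SigM n))}).toReal)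
        atTop ≤ δ := by
  intro δ hδ
  obtain ⟨c, _, hc, hform⟩ := heig
  obtain ⟨M₀, hM₀, hlimsup⟩ := hOP δ hδ
  refine ⟨M₀ / (c * √(c / 2)), by positivity, (limsup_toReal_measure_mono ?_).trans hlimsup⟩
  filter_upwards [ha0.eventually (gt_mem_nhds (show 0 < c / (2 * M₀) by positivity))]
    with n hn ω hω
  rw [Set.mem_ofPred_eq]
  by_contra! hsmall
  replace hsmall := (le_abs_self _).trans hsmall
  have hclose : specNorm (SigH n ω - SigM n) ≤ c / 2 :=
    hsmall.trans (by rw [lt_div_iff₀ (by positivity)] at hn; linarith)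
  obtain ⟨hunit, hbound⟩ := isUnit_and_specNorm_invSqrt_sub_le (hpd n).posSemidef (hpsd n ω) hc
    (fun x ↦ by simpa [dotProduct, sq] using (hform n x).1) hclose
  rcases hω with hdet | hlarge
  · exact ((isUnit_iff_isUnit_det _).1 hunit).ne_zero hdet
  · have : specNorm (SigH n ω - SigM n) / (c * √(c / 2)) ≤ M₀ / (c * √(c / 2)) * a n := by
      rw [div_mul_eq_mul_div]
      gcongr
    exact (hlarge.trans_le (hbound.trans this)).false

theorem invSqrt_estimation_error {Ω : Type*} [MeasurableSpace Ω] (P : Measure Ω)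
    [IsProbabilityMeasure P]
    (m : ℕ → ℕ) (SigM : (n : ℕ) → Matrix (Fin (m n)) (Fin (m n)) ℝ)
    (SigH : (n : ℕ) → Ω → Matrix (Fin (m n)) (Fin (m n)) ℝ)
    (hpd : ∀ n, (SigM n).PosDef)
    (heig : ∃ c₁ c₂ : ℝ, 0 < c₁ ∧ ∀ n (x : Fin (m n) → ℝ),
        c₁ * (∑ i, (x i) ^ 2) ≤ dotProduct x ((SigM n).mulVec x) ∧
        dotProduct x ((SigM n).mulVec x) ≤ c₂ * (∑ i, (x i) ^ 2))
    (hpsd : ∀ n ω, (SigH n ω).PosSemidef)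
    (a : ℕ → ℝ) (hapos : ∀ n, 0 < a n) (ha0 : Tendsto a atTop (nhds 0))
    (hOP : IsBigOP P (fun n ω => specNorm (SigH n ω - SigM n)) a) :
    ∀ δ : ℝ, 0 < δ → ∃ M : ℝ, 0 < M ∧
      Filter.limsup (fun n =>
          (P {ω | (SigH n ω).det = 0 ∨
            M * a n < specNorm (invSqrt (SigH n ω) - invSqrt (SigM n))}).toReal)
        atTop ≤ δ :=
  invSqrt_estimation_error_general P m SigM SigH hpd heig hpsd a ha0 hOP
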